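/- For every γ = (γ₁,γ₂,γ₃,0) ∈ ℤ⁴ with last coordinate zero, there exist constants X₁, X₂ ∈ ℂ and parameter vectors γ¹, γ² ∈ ℤ⁴ such that z₂·F_γ = X₁·F_{γ¹} + X₂·(z₁z₄ − z₂z₃)·F_{γ²} as polynomials in ℂ[z₁,z₂,z₃,z₄]. -/
import Mathlib

open MvPolynomial Finset

/-- The hypergeometric Γ-series `F_γ` for the lattice `B = ℤ⟨(1,-1,-1,1)⟩`,
as a polynomial in `ℂ[z₁,z₂,z₃,z₄]`. -/
noncomputable def GammaSeries (γ : Fin 4 → ℤ) : MvPolynomial (Fin 4) ℂ :=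
  ∑ n ∈ Finset.Icc (max (-γ 0) (-γ 3)) (min (γ 1) (γ 2)),
    MvPolynomial.C ((((γ 0 + n).toNat.factorial * (γ 1 - n).toNat.factorial *
        (γ 2 - n).toNat.factorial * (γ 3 + n).toNat.factorial : ℕ) : ℂ))⁻¹ *
      (X 0 ^ (γ 0 + n).toNat * X 1 ^ (γ 1 - n).toNat *
        X 2 ^ (γ 2 - n).toNat * X 3 ^ (γ 3 + n).toNat)

/-- Denominator `D(m) = (γ₀+m)!(γ₁+1-m)!(γ₂-m)!m!` as a complex number. -/
noncomputable def Dd (γ : Fin 4 → ℤ) (m : ℤ) : ℂ :=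
  (((γ 0 + m).toNat.factorial * (γ 1 + 1 - m).toNat.factorial *
      (γ 2 - m).toNat.factorial * m.toNat.factorial : ℕ) : ℂ)

/-- Monomial `z₁^(γ₀+m) z₂^(γ₁+1-m) z₃^(γ₂-m) z₄^m`. -/
noncomputable def Mm (γ : Fin 4 → ℤ) (m : ℤ) : MvPolynomial (Fin 4) ℂ :=
  X 0 ^ (γ 0 + m).toNat * X 1 ^ (γ 1 + 1 - m).toNat *
    X 2 ^ (γ 2 - m).toNat * X 3 ^ m.toNat

lemma fact_step (a : ℤ) (ha : 0 ≤ a) :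
    (((a + 1).toNat.factorial : ℕ) : ℂ) = ((a : ℂ) + 1) * ((a.toNat.factorial : ℕ) : ℂ) := by
  have h : (a + 1).toNat = a.toNat + 1 := by omega
  rw [h, Nat.factorial_succ]
  push_cast
  rw [show ((a.toNat : ℂ)) = (a : ℂ) from by exact_mod_cast congrArg Int.cast (Int.toNat_of_nonneg ha)]

lemma Dd_ne (γ : Fin 4 → ℤ) (m : ℤ) : Dd γ m ≠ 0 := by
  unfold Dd
  rw [Ne, Nat.cast_eq_zero]
  positivity

lemma lemA (γ : Fin 4 → ℤ) (hγ : γ 3 = 0) :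
    X 1 * GammaSeries γ =
      ∑ m ∈ Icc (max (-γ 0) 0) (min (γ 1 + 1) (γ 2)),
        C (((γ 1 + 1 - m : ℤ) : ℂ) / Dd γ m) * Mm γ m := by
  unfold GammaSeries
  rw [hγ, Finset.mul_sum]
  have hsub : Icc (max (-γ 0) (-(0:ℤ))) (min (γ 1) (γ 2)) ⊆
      Icc (max (-γ 0) 0) (min (γ 1 + 1) (γ 2)) := by
    intro x hx
    simp only [Finset.mem_Icc] at hx ⊢
    omega
  rw [← Finset.sum_subset hsub (by
    intro m hm hm'
    simp only [Finset.mem_Icc] at hm hm'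
    have h0 : γ 1 + 1 - m = 0 := by omega
    rw [h0]
    simp)]
  apply Finset.sum_congr rfl
  intro m hm
  simp only [Finset.mem_Icc] at hm
  have hm0 : 0 ≤ m := by omega
  have hm1 : m ≤ γ 1 := by omega
  have e1 : (γ 1 - m).toNat + 1 = (γ 1 + 1 - m).toNat := by omega
  have hc : C (((γ 1 + 1 - m : ℤ) : ℂ) / Dd γ m) =
      (C ((((γ 0 + m).toNat.factorial * (γ 1 - m).toNat.factorial *
          (γ 2 - m).toNat.factorial * (0 + m).toNat.factorial : ℕ) : ℂ))⁻¹ :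
        MvPolynomial (Fin 4) ℂ) := by
    congr 1
    have key : Dd γ m = ((γ 1 + 1 - m : ℤ) : ℂ) *
        (((γ 0 + m).toNat.factorial * (γ 1 - m).toNat.factorial *
          (γ 2 - m).toNat.factorial * (0 + m).toNat.factorial : ℕ) : ℂ) := by
      unfold Dd
      rw [show γ 1 + 1 - m = (γ 1 - m) + 1 from by ring, show (0:ℤ) + m = m from zero_add m]
      push_cast
      rw [fact_step (γ 1 - m) (by omega)]
      push_cast
      ring
    have hne : ((γ 1 + 1 - m : ℤ) : ℂ) ≠ 0 := by
      rw [Ne, Int.cast_eq_zero]; omega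
    rw [key, div_mul_cancel_left₀ hne]
  rw [hc]
  unfold Mm
  rw [← e1, pow_succ]
  ring

lemma lemB (γ : Fin 4 → ℤ) :
    GammaSeries ![γ 0, γ 1 + 1, γ 2, 0] =
      ∑ m ∈ Icc (max (-γ 0) 0) (min (γ 1 + 1) (γ 2)),
        C (1 / Dd γ m) * Mm γ m := by
  unfold GammaSeries Dd Mm
  simp only [Matrix.cons_val_zero, Matrix.cons_val_one, Matrix.head_cons,
    Matrix.cons_val_two, Matrix.tail_cons, Matrix.cons_val_three, Matrix.head_fin_const,
    neg_zero, zero_add, one_div]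

lemma index_set (γ : Fin 4 → ℤ) :
    Icc (max (-(γ 0 - 1)) (-(-1:ℤ))) (min (γ 1 + 1) (γ 2)) =
      Icc (max (-γ 0) 0 + 1) (min (γ 1 + 1) (γ 2)) := by
  congr 1
  omega

lemma lemC (γ : Fin 4 → ℤ) :
    X 0 * X 3 * GammaSeries ![γ 0 - 1, γ 1 + 1, γ 2, -1] =
      ∑ m ∈ Icc (max (-γ 0) 0) (min (γ 1 + 1) (γ 2)),
        C ((((γ 0 + m) * m : ℤ) : ℂ) / Dd γ m) * Mm γ m := by
  unfold GammaSeries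
  simp only [Matrix.cons_val_zero, Matrix.cons_val_one, Matrix.head_cons,
    Matrix.cons_val_two, Matrix.tail_cons, Matrix.cons_val_three, Matrix.head_fin_const]
  rw [index_set, Finset.mul_sum]
  have hsub : Icc (max (-γ 0) 0 + 1) (min (γ 1 + 1) (γ 2)) ⊆
      Icc (max (-γ 0) 0) (min (γ 1 + 1) (γ 2)) := by
    intro x hx
    simp only [Finset.mem_Icc] at hx ⊢
    omega
  rw [← Finset.sum_subset hsub (by
    intro m hm hm'
    simp only [Finset.mem_Icc] at hm hm'
    have h0 : (γ 0 + m) * m = 0 := by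
      have : γ 0 + m = 0 ∨ m = 0 := by omega
      rcases this with h | h <;> simp [h]
    rw [h0]
    simp)]
  apply Finset.sum_congr rfl
  intro n hn
  simp only [Finset.mem_Icc] at hn
  have hn1 : 1 ≤ n := by omega
  have hn0 : 1 - γ 0 ≤ n := by omega
  have e0 : (γ 0 - 1 + n).toNat + 1 = (γ 0 + n).toNat := by omega
  have e3 : (-1 + n).toNat + 1 = n.toNat := by omega
  have hc : C ((((γ 0 + n) * n : ℤ) : ℂ) / Dd γ n) =
      (C ((((γ 0 - 1 + n).toNat.factorial * (γ 1 + 1 - n).toNat.factorial *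
          (γ 2 - n).toNat.factorial * (-1 + n).toNat.factorial : ℕ) : ℂ))⁻¹ :
        MvPolynomial (Fin 4) ℂ) := by
    congr 1
    have f0 : (((γ 0 + n).toNat.factorial : ℕ) : ℂ) =
        (((γ 0 - 1 + n : ℤ) : ℂ) + 1) * (((γ 0 - 1 + n).toNat.factorial : ℕ) : ℂ) := by
      have := fact_step (γ 0 - 1 + n) (by omega)
      rw [show γ 0 - 1 + n + 1 = γ 0 + n from by ring] at this
      exact this
    have f3 : ((n.toNat.factorial : ℕ) : ℂ) =
        (((-1 + n : ℤ) : ℂ) + 1) * (((-1 + n).toNat.factorial : ℕ) : ℂ) := by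
      have := fact_step (-1 + n) (by omega)
      rw [show -1 + n + 1 = n from by ring] at this
      exact this
    have key : Dd γ n = (((γ 0 + n) * n : ℤ) : ℂ) *
        (((γ 0 - 1 + n).toNat.factorial * (γ 1 + 1 - n).toNat.factorial *
          (γ 2 - n).toNat.factorial * (-1 + n).toNat.factorial : ℕ) : ℂ) := by
      unfold Dd
      push_cast [f0, f3]
      ring
    have hne : (((γ 0 + n) * n : ℤ) : ℂ) ≠ 0 := by
      rw [Ne, Int.cast_eq_zero]
      intro h
      rcases mul_eq_zero.mp h with h | h <;> omega
    rw [key, div_mul_cancel_left₀ hne]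
  rw [hc]
  unfold Mm
  rw [← e0, ← e3, pow_succ, pow_succ]
  ring

lemma lemD (γ : Fin 4 → ℤ) :
    X 1 * X 2 * GammaSeries ![γ 0 - 1, γ 1 + 1, γ 2, -1] =
      ∑ m ∈ Icc (max (-γ 0) 0) (min (γ 1 + 1) (γ 2)),
        C ((((γ 1 + 1 - m) * (γ 2 - m) : ℤ) : ℂ) / Dd γ m) * Mm γ m := by
  unfold GammaSeries
  simp only [Matrix.cons_val_zero, Matrix.cons_val_one, Matrix.head_cons,
    Matrix.cons_val_two, Matrix.tail_cons, Matrix.cons_val_three, Matrix.head_fin_const]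
  rw [index_set]
  have hmap : Icc (max (-γ 0) 0 + 1) (min (γ 1 + 1) (γ 2)) =
      Finset.map (addRightEmbedding 1)
        (Icc (max (-γ 0) 0) (min (γ 1 + 1) (γ 2) - 1)) := by
    rw [Finset.map_add_right_Icc]
    congr 1
    omega
  rw [hmap, Finset.sum_map, Finset.mul_sum]
  simp only [addRightEmbedding_apply]
  have hsub : Icc (max (-γ 0) 0) (min (γ 1 + 1) (γ 2) - 1) ⊆
      Icc (max (-γ 0) 0) (min (γ 1 + 1) (γ 2)) := by
    intro x hx
    simp only [Finset.mem_Icc] at hx ⊢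
    omega
  rw [← Finset.sum_subset hsub (by
    intro m hm hm'
    simp only [Finset.mem_Icc] at hm hm'
    have h0 : (γ 1 + 1 - m) * (γ 2 - m) = 0 := by
      have : γ 1 + 1 - m = 0 ∨ γ 2 - m = 0 := by omega
      rcases this with h | h <;> simp [h]
    rw [h0]
    simp)]
  apply Finset.sum_congr rfl
  intro m hm
  simp only [Finset.mem_Icc] at hm
  have hm1 : m ≤ γ 1 := by omega
  have hm2 : m ≤ γ 2 - 1 := by omega
  have a0 : γ 0 - 1 + (m + 1) = γ 0 + m := by ring
  have a3 : -1 + (m + 1) = m := by ring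
  have e1 : (γ 1 + 1 - (m + 1)).toNat + 1 = (γ 1 + 1 - m).toNat := by omega
  have e2 : (γ 2 - (m + 1)).toNat + 1 = (γ 2 - m).toNat := by omega
  rw [a0, a3]
  have hc : C ((((γ 1 + 1 - m) * (γ 2 - m) : ℤ) : ℂ) / Dd γ m) =
      (C ((((γ 0 + m).toNat.factorial * (γ 1 + 1 - (m + 1)).toNat.factorial *
          (γ 2 - (m + 1)).toNat.factorial * m.toNat.factorial : ℕ) : ℂ))⁻¹ :
        MvPolynomial (Fin 4) ℂ) := by
    congr 1
    have f1 : (((γ 1 + 1 - m).toNat.factorial : ℕ) : ℂ) =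
        (((γ 1 + 1 - (m + 1) : ℤ) : ℂ) + 1) *
          (((γ 1 + 1 - (m + 1)).toNat.factorial : ℕ) : ℂ) := by
      have := fact_step (γ 1 + 1 - (m + 1)) (by omega)
      rw [show γ 1 + 1 - (m + 1) + 1 = γ 1 + 1 - m from by ring] at this
      exact this
    have f2 : (((γ 2 - m).toNat.factorial : ℕ) : ℂ) =
        (((γ 2 - (m + 1) : ℤ) : ℂ) + 1) *
          (((γ 2 - (m + 1)).toNat.factorial : ℕ) : ℂ) := by
      have := fact_step (γ 2 - (m + 1)) (by omega)
      rw [show γ 2 - (m + 1) + 1 = γ 2 - m from by ring] at this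
      exact this
    have key : Dd γ m = (((γ 1 + 1 - m) * (γ 2 - m) : ℤ) : ℂ) *
        (((γ 0 + m).toNat.factorial * (γ 1 + 1 - (m + 1)).toNat.factorial *
          (γ 2 - (m + 1)).toNat.factorial * m.toNat.factorial : ℕ) : ℂ) := by
      unfold Dd
      push_cast [f1, f2]
      ring
    have hne : (((γ 1 + 1 - m) * (γ 2 - m) : ℤ) : ℂ) ≠ 0 := by
      rw [Ne, Int.cast_eq_zero]
      intro h
      rcases mul_eq_zero.mp h with h | h <;> omega
    rw [key, div_mul_cancel_left₀ hne]
  rw [hc]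
  unfold Mm
  rw [← e1, ← e2, pow_succ, pow_succ]
  ring

/-- Multiplication of `F_γ` by `X 1` is a combination
`X₁ F_{γ¹} + X₂ (z₁z₄ − z₂z₃) F_{γ²}`. -/
theorem gammaSeries_mul_var (γ : Fin 4 → ℤ) (hγ : γ 3 = 0) :
    ∃ (X₁ X₂ : ℂ) (δ₁ δ₂ : Fin 4 → ℤ),
      (X 1) * GammaSeries γ =
        C X₁ * GammaSeries δ₁ +
          C X₂ * ((X 0 * X 3 - X 1 * X 2) * GammaSeries δ₂) := by
  by_cases hcase : γ 0 + γ 1 + γ 2 + 1 ≤ 0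
  · refine ⟨0, 0, γ, γ, ?_⟩
    have hempty : GammaSeries γ = 0 := by
      unfold GammaSeries
      rw [hγ, Finset.Icc_eq_empty (by omega), Finset.sum_empty]
    rw [hempty]
    simp
  · push_neg at hcase
    have hs : (γ 0 + γ 1 + γ 2 + 1 : ℤ) ≠ 0 := by omega
    have hσ : ((γ 0 + γ 1 + γ 2 + 1 : ℤ) : ℂ) ≠ 0 := by
      rw [Ne, Int.cast_eq_zero]; exact hs
    refine ⟨(((γ 1 + 1) * (γ 0 + γ 1 + 1) : ℤ) : ℂ) / ((γ 0 + γ 1 + γ 2 + 1 : ℤ) : ℂ),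
      -1 / ((γ 0 + γ 1 + γ 2 + 1 : ℤ) : ℂ),
      ![γ 0, γ 1 + 1, γ 2, 0], ![γ 0 - 1, γ 1 + 1, γ 2, -1], ?_⟩
    rw [lemA γ hγ, lemB γ, sub_mul, lemC γ, lemD γ, ← Finset.sum_sub_distrib,
      Finset.mul_sum, Finset.mul_sum, ← Finset.sum_add_distrib]
    apply Finset.sum_congr rfl
    intro m hm
    have hD := Dd_ne γ m
    rw [show
      C ((((γ 1 + 1) * (γ 0 + γ 1 + 1) : ℤ) : ℂ) / ((γ 0 + γ 1 + γ 2 + 1 : ℤ) : ℂ)) *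
          (C (1 / Dd γ m) * Mm γ m) +
        C (-1 / ((γ 0 + γ 1 + γ 2 + 1 : ℤ) : ℂ)) *
          (C ((((γ 0 + m) * m : ℤ) : ℂ) / Dd γ m) * Mm γ m -
            C ((((γ 1 + 1 - m) * (γ 2 - m) : ℤ) : ℂ) / Dd γ m) * Mm γ m) =
      C ((((γ 1 + 1) * (γ 0 + γ 1 + 1) : ℤ) : ℂ) / ((γ 0 + γ 1 + γ 2 + 1 : ℤ) : ℂ) *
          (1 / Dd γ m) +
        (-1 / ((γ 0 + γ 1 + γ 2 + 1 : ℤ) : ℂ)) *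
          ((((γ 0 + m) * m : ℤ) : ℂ) / Dd γ m -
            (((γ 1 + 1 - m) * (γ 2 - m) : ℤ) : ℂ) / Dd γ m)) * Mm γ m from by
      rw [C_add, C_mul, C_mul, C_sub]
      ring]
    congr 1
    rw [C_inj]
    set d := Dd γ m with hd
    set s : ℂ := ((γ 0 + γ 1 + γ 2 + 1 : ℤ) : ℂ) with hsdef
    field_simp
    rw [hsdef]
    push_cast
    ring
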